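/- Let R ≥ 1/2 and let F ∈ C^∞([−R,R]). Fix either sign ±. Then the function defined for y ≠ ±1/2 by f_±(y) = ((y ∓ 1/2)/(y ± h(y))) · ∫₀¹ (1 ± h'(±1/2 + t(y ∓ 1/2))) F(±1/2 + t(y ∓ 1/2)) dt extends to a function f_± ∈ C^∞([−R,R]) which solves the resolvent equation ((y ± h(y))/(1 ± h'(y))) f_±'(y) + f_±(y) = F(y) for all y ∈ [−R,R]; equivalently, (I − L_±)f_± = F. Moreover, if F_−, F_+ ∈ C^∞([−R,R]) satisfy F_−(−y) = −F_+(y) for all y, then the corresponding solutions satisfy f_−(−y) = −f_+(y) for all y. -/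

import Mathlib

open Real MeasureTheory intervalIntegral

open scoped ContDiff

/-- The height function `h(y) = √(2 + y²) − 2`. -/
noncomputable def hfun (y : ℝ) : ℝ := Real.sqrt (2 + y ^ 2) - 2

/-- The explicit solution formula for the resolvent equation `(I − L_±)f = F`,
valid away from `y = ±1/2`; the sign is encoded by `σ ∈ {1, −1}`. -/
noncomputable def resolventSol (σ : ℝ) (F : ℝ → ℝ) (y : ℝ) : ℝ :=
  ((y - σ / 2) / (y + σ * hfun y)) *
    ∫ t in (0:ℝ)..1,
      (1 + σ * deriv hfun (σ / 2 + t * (y - σ / 2))) * F (σ / 2 + t * (y - σ / 2))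

/-! Rationalizing, `y + σ h(y) = (y - σ/2) B(y)` with `B(y) = 4 / (√(2 + y²) + 2 - σ y)` smooth
and positive, so away from `σ/2` the solution formula is `G / B` where
`G(y) = ∫₀¹ g(σ/2 + t (y - σ/2)) dt` and `g = (1 + σ h') F`. The quotient `G / B` is smooth
everywhere, `G` being a parametric integral of a smooth integrand. The substitution
`s = σ/2 + t (y - σ/2)` gives `(y + σ h(y)) (G / B)(y) = ∫_{σ/2}^y g`; differentiating yields
`(1 + σ h') f + (y + σ h) f' = (1 + σ h') F`, and `1 + σ h' > 0` because `|h'| < 1`.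
Oddness of `h'` and `B₋(-y) = B₊(y)` give the symmetry. -/

section ParametricIntegral

variable {E : Type*} [NormedAddCommGroup E] [NormedSpace ℝ E]

theorem sub_smul_integral_comp_segment (g : ℝ → E) (a y : ℝ) :
    (y - a) • ∫ t in (0 : ℝ)..1, g (a + t * (y - a)) = ∫ s in a..y, g s := by
  simp only [mul_comm _ (y - a)]
  rw [smul_integral_comp_add_mul]
  simp

variable {w : ℝ × ℝ → E} {a b : ℝ}

theorem hasDerivAt_intervalIntegral_of_contDiff (hw : ContDiff ℝ 1 w) (y : ℝ) :
    HasDerivAt (fun x => ∫ t in a..b, w (t, x)) (∫ t in a..b, fderiv ℝ w (t, y) (0, 1)) y := by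
  have hw' : Continuous fun p => fderiv ℝ w p (0, 1) :=
    (hw.continuous_fderiv one_ne_zero).clm_apply continuous_const
  have hslice : ∀ x, Continuous fun t => w (t, x) := fun x => by fun_prop
  obtain ⟨C, hC⟩ :=
    (isCompact_uIcc.prod (isCompact_closedBall y 1)).exists_bound_of_continuousOn
      hw'.continuousOn
  refine (hasDerivAt_integral_of_dominated_loc_of_deriv_le (bound := fun _ => C)
    (Metric.ball_mem_nhds y one_pos) (.of_forall fun x => (hslice x).aestronglyMeasurable)
    ((hslice y).intervalIntegrable a b) (by fun_prop : Continuous _).aestronglyMeasurable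
    (.of_forall fun t ht x hx =>
      hC _ ⟨Set.uIoc_subset_uIcc ht, Metric.ball_subset_closedBall hx⟩)
    intervalIntegrable_const (.of_forall fun t _ x _ => ?_)).2
  have hline : HasDerivAt (fun z : ℝ => (t, z)) ((0 : ℝ), (1 : ℝ)) x :=
    (hasDerivAt_const x t).prodMk (hasDerivAt_id x)
  exact ((hw.differentiable one_ne_zero) _).hasFDerivAt.comp_hasDerivAt x hline

theorem contDiff_intervalIntegral_of_contDiff {n : ℕ} (hw : ContDiff ℝ n w) :
    ContDiff ℝ n fun y => ∫ t in a..b, w (t, y) := by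
  induction n generalizing w with
  | zero =>
    exact contDiff_zero.2 <| continuous_parametric_intervalIntegral_of_continuous'
      (f := fun y t => w (t, y)) (hw.continuous.comp continuous_swap) a b
  | succ n ih =>
    have hw1 : ContDiff ℝ 1 w := hw.of_le (by exact_mod_cast Nat.le_add_left 1 n)
    have hderiv := hasDerivAt_intervalIntegral_of_contDiff (a := a) (b := b) hw1
    rw [Nat.cast_add, Nat.cast_one, contDiff_succ_iff_deriv]
    refine ⟨fun y => (hderiv y).differentiableAt, by simp, ?_⟩
    rw [funext fun y => (hderiv y).deriv]
    exact ih ((hw.fderiv_right le_rfl).clm_apply contDiff_const)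

end ParametricIntegral

theorem abs_lt_sqrt_two_add_sq (y : ℝ) : |y| < √(2 + y ^ 2) := by
  rw [← Real.sqrt_sq_eq_abs]
  exact Real.sqrt_lt_sqrt (sq_nonneg y) (by linarith)

theorem contDiff_sqrt_two_add_sq : ContDiff ℝ ∞ fun y : ℝ => √(2 + y ^ 2) :=
  (contDiff_const.add (contDiff_id.pow 2)).sqrt fun y => by positivity

theorem hasDerivAt_hfun (y : ℝ) : HasDerivAt hfun (y / √(2 + y ^ 2)) y := by
  have h := (((hasDerivAt_pow 2 y).const_add 2).sqrt (by positivity)).sub_const 2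
  refine h.congr_deriv ?_
  have : √(2 + y ^ 2) ≠ 0 := by positivity
  field_simp
  norm_num

theorem deriv_hfun (y : ℝ) : deriv hfun y = y / √(2 + y ^ 2) :=
  (hasDerivAt_hfun y).deriv

theorem contDiff_deriv_hfun : ContDiff ℝ ∞ (deriv hfun) := by
  rw [funext deriv_hfun]
  exact contDiff_id.div contDiff_sqrt_two_add_sq fun y => by positivity

theorem abs_deriv_hfun_lt_one (y : ℝ) : |deriv hfun y| < 1 := by
  have hpos : 0 < √(2 + y ^ 2) := by positivity
  rw [deriv_hfun, abs_div, abs_of_pos hpos, div_lt_one hpos]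
  exact abs_lt_sqrt_two_add_sq y

theorem deriv_hfun_neg (y : ℝ) : deriv hfun (-y) = -deriv hfun y := by
  simp only [deriv_hfun, neg_sq, neg_div]

section Resolvent

variable {σ : ℝ}

theorem abs_sign_mul (hσ : σ = 1 ∨ σ = -1) (x : ℝ) : |σ * x| = |x| := by
  rcases hσ with rfl | rfl <;> simp

theorem one_add_sign_mul_deriv_hfun_pos (hσ : σ = 1 ∨ σ = -1) (y : ℝ) :
    0 < 1 + σ * deriv hfun y := by
  have := abs_sign_mul hσ (deriv hfun y) ▸ abs_deriv_hfun_lt_one y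
  linarith [neg_abs_le (σ * deriv hfun y)]

noncomputable def resolventFactor (σ y : ℝ) : ℝ := 4 / (√(2 + y ^ 2) + 2 - σ * y)

theorem resolventFactor_denom_pos (hσ : σ = 1 ∨ σ = -1) (y : ℝ) :
    0 < √(2 + y ^ 2) + 2 - σ * y := by
  have := abs_sign_mul hσ y ▸ abs_lt_sqrt_two_add_sq y
  linarith [le_abs_self (σ * y)]

theorem resolventFactor_pos (hσ : σ = 1 ∨ σ = -1) (y : ℝ) : 0 < resolventFactor σ y :=
  div_pos four_pos (resolventFactor_denom_pos hσ y)

theorem contDiff_resolventFactor (hσ : σ = 1 ∨ σ = -1) : ContDiff ℝ ∞ (resolventFactor σ) :=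
  contDiff_const.div ((contDiff_sqrt_two_add_sq.add contDiff_const).sub
    (contDiff_const.mul contDiff_id)) fun y => (resolventFactor_denom_pos hσ y).ne'

theorem add_sign_mul_hfun_eq (hσ : σ = 1 ∨ σ = -1) (y : ℝ) :
    y + σ * hfun y = (y - σ / 2) * resolventFactor σ y := by
  have hsq : √(2 + y ^ 2) ^ 2 = 2 + y ^ 2 := Real.sq_sqrt (by positivity)
  have hσsq : σ ^ 2 = 1 := by rcases hσ with rfl | rfl <;> norm_num
  rw [resolventFactor, ← mul_div_assoc, eq_div_iff (resolventFactor_denom_pos hσ y).ne', hfun]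
  linear_combination σ * hsq + (2 * y - √(2 + y ^ 2) * y) * hσsq

noncomputable def resolventWeight (σ : ℝ) (F : ℝ → ℝ) (s : ℝ) : ℝ :=
  (1 + σ * deriv hfun s) * F s

theorem contDiff_resolventWeight {F : ℝ → ℝ} (hF : ContDiff ℝ ∞ F) :
    ContDiff ℝ ∞ (resolventWeight σ F) :=
  (contDiff_const.add (contDiff_const.mul contDiff_deriv_hfun)).mul hF

noncomputable def resolventExt (σ : ℝ) (F : ℝ → ℝ) (y : ℝ) : ℝ :=
  (∫ t in (0 : ℝ)..1, resolventWeight σ F (σ / 2 + t * (y - σ / 2))) / resolventFactor σ y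

theorem contDiff_resolventExt (hσ : σ = 1 ∨ σ = -1) {F : ℝ → ℝ} (hF : ContDiff ℝ ∞ F) :
    ContDiff ℝ ∞ (resolventExt σ F) := by
  have hintegrand :
      ContDiff ℝ ∞ fun p : ℝ × ℝ => resolventWeight σ F (σ / 2 + p.1 * (p.2 - σ / 2)) :=
    (contDiff_resolventWeight hF).comp (contDiff_const.add (contDiff_fst.mul (contDiff_snd.sub contDiff_const)))
  have hintegral : ContDiff ℝ ∞ fun y =>
      ∫ t in (0 : ℝ)..1, resolventWeight σ F (σ / 2 + t * (y - σ / 2)) :=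
    contDiff_infty.2 fun n =>
      contDiff_intervalIntegral_of_contDiff (contDiff_infty.1 hintegrand n)
  exact hintegral.div (contDiff_resolventFactor hσ) fun y => (resolventFactor_pos hσ y).ne'

theorem resolventExt_eq_resolventSol (hσ : σ = 1 ∨ σ = -1) (F : ℝ → ℝ) {y : ℝ}
    (hy : y ≠ σ / 2) : resolventExt σ F y = resolventSol σ F y := by
  rw [resolventSol, add_sign_mul_hfun_eq hσ, div_mul_eq_div_div, div_self (sub_ne_zero.2 hy),
    one_div, inv_mul_eq_div, resolventExt]
  rfl

theorem add_sign_mul_hfun_mul_resolventExt (hσ : σ = 1 ∨ σ = -1) (F : ℝ → ℝ) (y : ℝ) :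
    (y + σ * hfun y) * resolventExt σ F y = ∫ s in σ / 2..y, resolventWeight σ F s := by
  rw [add_sign_mul_hfun_eq hσ, resolventExt, mul_assoc, mul_div_cancel₀ _
    (resolventFactor_pos hσ y).ne', ← smul_eq_mul, sub_smul_integral_comp_segment]

theorem resolventExt_ode (hσ : σ = 1 ∨ σ = -1) {F : ℝ → ℝ} (hF : ContDiff ℝ ∞ F) (y : ℝ) :
    ((y + σ * hfun y) / (1 + σ * deriv hfun y)) * deriv (resolventExt σ F) y +
      resolventExt σ F y = F y := by
  have hA : HasDerivAt (fun y => y + σ * hfun y) (1 + σ * deriv hfun y) y := by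
    rw [deriv_hfun]
    exact (hasDerivAt_id' y).add ((hasDerivAt_hfun y).const_mul σ)
  have hf : HasDerivAt (resolventExt σ F) (deriv (resolventExt σ F) y) y :=
    ((contDiff_resolventExt hσ hF).differentiable (by simp) y).hasDerivAt
  have hproduct : HasDerivAt (fun y => (y + σ * hfun y) * resolventExt σ F y)
      ((1 + σ * deriv hfun y) * resolventExt σ F y +
        (y + σ * hfun y) * deriv (resolventExt σ F) y) y := hA.mul hf
  rw [funext (add_sign_mul_hfun_mul_resolventExt hσ F)] at hproduct
  have hprimitive := hproduct.unique
    ((contDiff_resolventWeight hF).continuous.integral_hasStrictDerivAt (σ / 2) y).hasDerivAt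
  have hA' := (one_add_sign_mul_deriv_hfun_pos hσ y).ne'
  rw [resolventWeight] at hprimitive
  field_simp
  linarith

theorem resolventExt_neg {Fm Fp : ℝ → ℝ} (hodd : ∀ y, Fm (-y) = -Fp y) (y : ℝ) :
    resolventExt (-1) Fm (-y) = -resolventExt 1 Fp y := by
  have hfactor : resolventFactor (-1) (-y) = resolventFactor 1 y := by
    simp only [resolventFactor, neg_sq, neg_mul_neg, one_mul]
  have hweight (s : ℝ) : resolventWeight (-1) Fm (-s) = -resolventWeight 1 Fp s := by
    simp only [resolventWeight, deriv_hfun_neg, hodd]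
    ring
  have hintegral :
      (∫ t in (0 : ℝ)..1, resolventWeight (-1) Fm (-1 / 2 + t * (-y - -1 / 2))) =
      -∫ t in (0 : ℝ)..1, resolventWeight 1 Fp (1 / 2 + t * (y - 1 / 2)) := by
    rw [← intervalIntegral.integral_neg]
    refine intervalIntegral.integral_congr fun t _ => ?_
    simp only [← hweight]
    ring_nf
  rw [resolventExt, resolventExt, hfactor, hintegral, neg_div]

end Resolvent

theorem resolvent_equation_general (R : ℝ) :
    (∀ σ : ℝ, σ = 1 ∨ σ = -1 → ∀ F : ℝ → ℝ, ContDiff ℝ (⊤ : ℕ∞) F →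
      ∃ f : ℝ → ℝ, ContDiff ℝ (⊤ : ℕ∞) f ∧
        (∀ y ∈ Set.Icc (-R) R, y ≠ σ / 2 → f y = resolventSol σ F y) ∧
        (∀ y ∈ Set.Icc (-R) R,
          ((y + σ * hfun y) / (1 + σ * deriv hfun y)) * deriv f y + f y = F y)) ∧
    (∀ Fm Fp : ℝ → ℝ, ContDiff ℝ (⊤ : ℕ∞) Fm → ContDiff ℝ (⊤ : ℕ∞) Fp →
      (∀ y, Fm (-y) = -Fp y) →
      ∃ fm fp : ℝ → ℝ, ContDiff ℝ (⊤ : ℕ∞) fm ∧ ContDiff ℝ (⊤ : ℕ∞) fp ∧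
        (∀ y ∈ Set.Icc (-R) R, y ≠ -(1 / 2) → fm y = resolventSol (-1) Fm y) ∧
        (∀ y ∈ Set.Icc (-R) R, y ≠ 1 / 2 → fp y = resolventSol 1 Fp y) ∧
        (∀ y ∈ Set.Icc (-R) R,
          ((y - hfun y) / (1 - deriv hfun y)) * deriv fm y + fm y = Fm y) ∧
        (∀ y ∈ Set.Icc (-R) R,
          ((y + hfun y) / (1 + deriv hfun y)) * deriv fp y + fp y = Fp y) ∧
        (∀ y ∈ Set.Icc (-R) R, fm (-y) = -fp y)) := by
  have hminus : (-1 : ℝ) = 1 ∨ (-1 : ℝ) = -1 := .inr rfl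
  have hplus : (1 : ℝ) = 1 ∨ (1 : ℝ) = -1 := .inl rfl
  refine ⟨fun σ hσ F hF => ⟨resolventExt σ F, contDiff_resolventExt hσ hF,
      fun y _ hy => resolventExt_eq_resolventSol hσ F hy, fun y _ => resolventExt_ode hσ hF y⟩,
    fun Fm Fp hFm hFp hodd => ⟨resolventExt (-1) Fm, resolventExt 1 Fp,
      contDiff_resolventExt hminus hFm, contDiff_resolventExt hplus hFp,
      fun y _ hy => resolventExt_eq_resolventSol hminus Fm (by rwa [neg_div]),
      fun y _ hy => resolventExt_eq_resolventSol hplus Fp hy,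
      fun y _ => ?_, fun y _ => by simpa using resolventExt_ode hplus hFp y,
      fun y _ => resolventExt_neg hodd y⟩⟩
  simpa only [neg_one_mul, ← sub_eq_add_neg] using resolventExt_ode hminus hFm y

theorem resolvent_equation (R : ℝ) (hR : 1 / 2 ≤ R) :
    (∀ σ : ℝ, σ = 1 ∨ σ = -1 → ∀ F : ℝ → ℝ, ContDiff ℝ (⊤ : ℕ∞) F →
      ∃ f : ℝ → ℝ, ContDiff ℝ (⊤ : ℕ∞) f ∧
        (∀ y ∈ Set.Icc (-R) R, y ≠ σ / 2 → f y = resolventSol σ F y) ∧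
        (∀ y ∈ Set.Icc (-R) R,
          ((y + σ * hfun y) / (1 + σ * deriv hfun y)) * deriv f y + f y = F y)) ∧
    (∀ Fm Fp : ℝ → ℝ, ContDiff ℝ (⊤ : ℕ∞) Fm → ContDiff ℝ (⊤ : ℕ∞) Fp →
      (∀ y, Fm (-y) = -Fp y) →
      ∃ fm fp : ℝ → ℝ, ContDiff ℝ (⊤ : ℕ∞) fm ∧ ContDiff ℝ (⊤ : ℕ∞) fp ∧
        (∀ y ∈ Set.Icc (-R) R, y ≠ -(1 / 2) → fm y = resolventSol (-1) Fm y) ∧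
        (∀ y ∈ Set.Icc (-R) R, y ≠ 1 / 2 → fp y = resolventSol 1 Fp y) ∧
        (∀ y ∈ Set.Icc (-R) R,
          ((y - hfun y) / (1 - deriv hfun y)) * deriv fm y + fm y = Fm y) ∧
        (∀ y ∈ Set.Icc (-R) R,
          ((y + hfun y) / (1 + deriv hfun y)) * deriv fp y + fp y = Fp y) ∧
        (∀ y ∈ Set.Icc (-R) R, fm (-y) = -fp y)) :=
  resolvent_equation_general R
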